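/- arXiv:1010.2031 — 6 statements merged into one kernel-verified Lean document; each statement's English description precedes it below -/
import Mathlib

section
/- Equip the poset of contexts of A with the lower-set (downset) topology, in which a set of contexts is open precisely when it is downward closed under inclusion. Then: (a) the projection π : Σ* → contexts, (C,λ) ↦ C, is continuous; (b) for every clopen subobject S of the spectral presheaf (a family assigning to each context C a clopen subset S_C ⊆ Σ_C such that λ ∈ S_C and D ⊆ C imply λ|_D ∈ S_D), the set I(S) := {(C,λ) ∈ Σ : λ ∈ S_C} is open in Σ*; and (c) the map I is injective and satisfies I(S ∧ T) = I(S) ∩ I(T) and I(S ∨ T) = I(S) ∪ I(T), where (S ∧ T)_C := S_C ∩ T_C and (S ∨ T)_C := S_C ∪ T_C. -/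
open WeakDual

variable (A : Type*) [CStarAlgebra A]

/-- A classical context: a commutative unital closed star-subalgebra of `A`. -/
structure Context where
  carrier : Subalgebra ℂ A
  star_mem' : ∀ x ∈ carrier, star x ∈ carrier
  isClosed' : IsClosed (carrier : Set A)
  mul_comm' : ∀ x ∈ carrier, ∀ y ∈ carrier, x * y = y * x

variable {A}

/-- The Gelfand spectrum of a context: the character space of `C`. -/
abbrev Context.Spec (C : Context A) : Type _ := characterSpace ℂ C.carrier

/-- The inclusion of a smaller context into a larger one, as a continuous linear map. -/
def Context.inclCLM {D C : Context A} (h : D.carrier ≤ C.carrier) :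
    D.carrier →L[ℂ] C.carrier where
  toLinearMap := (Subalgebra.inclusion h).toLinearMap
  cont := continuous_induced_rng.mpr continuous_subtype_val

/-- Restriction of a character along an inclusion of contexts. -/
noncomputable def Context.restrictChar {D C : Context A} (h : D.carrier ≤ C.carrier)
    (lam : C.Spec) : D.Spec :=
  ⟨(lam : WeakDual ℂ C.carrier).comp (Context.inclCLM h), by
    constructor
    · intro h0
      have h1 : (lam : WeakDual ℂ C.carrier).comp (Context.inclCLM h) (1 : D.carrier) = 0 := by
        rw [h0]; rfl
      have h2 : (lam : WeakDual ℂ C.carrier).comp (Context.inclCLM h) (1 : D.carrier) = 1 := by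
        show lam ((Context.inclCLM h) (1 : D.carrier)) = 1
        have h3 : (Context.inclCLM h) (1 : D.carrier) = (1 : C.carrier) := rfl
        rw [h3]
        exact map_one lam
      rw [h1] at h2
      exact zero_ne_one h2
    · intro x y
      show lam ((Context.inclCLM h) (x * y)) = lam ((Context.inclCLM h) x) * lam ((Context.inclCLM h) y)
      have h4 : (Context.inclCLM h) (x * y) = (Context.inclCLM h) x * (Context.inclCLM h) y := rfl
      rw [h4]
      exact map_mul lam _ _⟩

/-- The disjoint union of all Gelfand spectra of contexts. -/
abbrev SigmaSpace (A : Type*) [CStarAlgebra A] : Type _ := (C : Context A) × C.Spec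

/-- The topology on the poset of contexts whose opens are the downward closed sets. -/
instance : TopologicalSpace (Context A) where
  IsOpen s := ∀ C ∈ s, ∀ D : Context A, D.carrier ≤ C.carrier → D ∈ s
  isOpen_univ := fun _ _ _ _ => trivial
  isOpen_inter := fun s t hs ht C hC D hD => ⟨hs C hC.1 D hD, ht C hC.2 D hD⟩
  isOpen_sUnion := fun S hS C hC D hD => by
    obtain ⟨s, hsS, hCs⟩ := hC
    exact ⟨s, hsS, hS s hsS C hCs D hD⟩

/-- The topology `𝒪 Σ*` of the contravariant approach: a set is open iff each of its fibres
is open and it is closed under restriction of characters to smaller contexts. -/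
instance : TopologicalSpace (SigmaSpace A) where
  IsOpen U := (∀ C : Context A, IsOpen {lam : C.Spec | Sigma.mk C lam ∈ U}) ∧
    ∀ (C D : Context A) (h : D.carrier ≤ C.carrier) (lam : C.Spec),
      Sigma.mk C lam ∈ U → Sigma.mk D (Context.restrictChar h lam) ∈ U
  isOpen_univ := ⟨fun _ => isOpen_univ, fun _ _ _ _ _ => trivial⟩
  isOpen_inter := fun U V hU hV => ⟨fun C => (hU.1 C).inter (hV.1 C),
    fun C D h lam hm => ⟨hU.2 C D h lam hm.1, hV.2 C D h lam hm.2⟩⟩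
  isOpen_sUnion := fun S hS => by
    constructor
    · intro C
      have h1 : {lam : C.Spec | Sigma.mk C lam ∈ ⋃₀ S} =
          ⋃ U ∈ S, {lam : C.Spec | Sigma.mk C lam ∈ U} := by
        ext lam; simp
      rw [h1]
      exact isOpen_biUnion fun U hU => (hS U hU).1 C
    · rintro C D h lam ⟨U, hUS, hmU⟩
      exact ⟨U, hUS, (hS U hUS).2 C D h lam hmU⟩

variable (A) in
/-- A clopen subobject of the spectral presheaf: a family of clopen subsets of the Gelfand
spectra which is closed under restriction of characters to smaller contexts. -/
structure ClopenSubobject where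
  toFun : ∀ C : Context A, Set C.Spec
  isClopen' : ∀ C : Context A, IsClopen (toFun C)
  restrict_mem' : ∀ (C D : Context A) (h : D.carrier ≤ C.carrier) (lam : C.Spec),
    lam ∈ toFun C → Context.restrictChar h lam ∈ toFun D

/-- The meet of two clopen subobjects, given contextwise by intersection. -/
def ClopenSubobject.inf (S T : ClopenSubobject A) : ClopenSubobject A where
  toFun C := S.toFun C ∩ T.toFun C
  isClopen' C := (S.isClopen' C).inter (T.isClopen' C)
  restrict_mem' C D h lam hm := ⟨S.restrict_mem' C D h lam hm.1, T.restrict_mem' C D h lam hm.2⟩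

/-- The join of two clopen subobjects, given contextwise by union. -/
def ClopenSubobject.sup (S T : ClopenSubobject A) : ClopenSubobject A where
  toFun C := S.toFun C ∪ T.toFun C
  isClopen' C := (S.isClopen' C).union (T.isClopen' C)
  restrict_mem' C D h lam hm := hm.elim (fun h' => Or.inl (S.restrict_mem' C D h lam h'))
    (fun h' => Or.inr (T.restrict_mem' C D h lam h'))

/-- The map `I` sending a clopen subobject to the corresponding subset of `Σ*`. -/
def ClopenSubobject.embed (S : ClopenSubobject A) : Set (SigmaSpace A) :=
  {p : SigmaSpace A | p.2 ∈ S.toFun p.1}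

/-- The fibre of `π⁻¹ s` over a context `C` is all of `Σ_C` or empty. -/
theorem continuous_sigmaSpace_fst : Continuous (fun p : SigmaSpace A => p.1) :=
  continuous_def.mpr fun s hs =>
    ⟨fun C => isOpen_const (p := C ∈ s), fun C D h _ hC => hs C hC D h⟩

namespace ClopenSubobject

theorem ext {S T : ClopenSubobject A} (h : ∀ C, S.toFun C = T.toFun C) : S = T := by
  cases S
  cases T
  congr 1
  exact funext h

theorem isOpen_embed (S : ClopenSubobject A) : IsOpen S.embed :=
  ⟨fun C => (S.isClopen' C).isOpen, S.restrict_mem'⟩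

theorem embed_injective : Function.Injective (embed (A := A)) := fun _ _ h =>
  ext fun C => Set.ext fun lam => Set.ext_iff.mp h ⟨C, lam⟩

theorem embed_inf (S T : ClopenSubobject A) : (S.inf T).embed = S.embed ∩ T.embed := rfl

theorem embed_sup (S T : ClopenSubobject A) : (S.sup T).embed = S.embed ∪ T.embed := rfl

end ClopenSubobject

/-- With the downset topology on contexts: (a) the projection
`π : Σ* → contexts` is continuous; (b) for every clopen subobject `S` of the spectral
presheaf, `I(S)` is open in `Σ*`; (c) `I` is injective and preserves binary meets and joins. -/
theorem statement0 :
    Continuous (fun p : SigmaSpace A => p.1) ∧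
    (∀ S : ClopenSubobject A, IsOpen S.embed) ∧
    Function.Injective (ClopenSubobject.embed (A := A)) ∧
    (∀ S T : ClopenSubobject A, (S.inf T).embed = S.embed ∩ T.embed) ∧
    (∀ S T : ClopenSubobject A, (S.sup T).embed = S.embed ∪ T.embed) :=
  ⟨continuous_sigmaSpace_fst, ClopenSubobject.isOpen_embed, ClopenSubobject.embed_injective,
    ClopenSubobject.embed_inf, ClopenSubobject.embed_sup⟩
end

section
/- Equip the poset of contexts with the lower-set topology (opens = downward closed sets of contexts) and let π : Σ* → contexts be the projection (C,λ) ↦ C. A section s of π, i.e. a function assigning to each context C a character s(C) ∈ Σ_C (viewed as the map C ↦ (C, s(C)) from contexts to Σ*), is continuous if and only if it is a compatible family of characters, i.e. s(D) = s(C)|_D whenever D ⊆ C. Hence the points of the internal locale Σ* correspond exactly to the global sections of the spectral presheaf. -/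
open WeakDual

variable (A : Type*) [CStarAlgebra A]

variable {A}

/-! Both topologies are read off from specialization. Contexts carry an Alexandrov topology
whose specialization order is inclusion, so a map out of them is continuous exactly when it
preserves specialization. In `Σ*`, the point `(D, μ)` specializes to `(C, λ)` with `D ⊆ C`
exactly when `μ = λ|_D`: every open set is closed under restriction, and conversely the
characters `λ` with `λ|_D ≠ μ` form an open set. -/

section Specialization

variable {α β : Type*} [TopologicalSpace α] [AlexandrovDiscrete α] [TopologicalSpace β]

theorem continuous_iff_map_specializes {f : α → β} :
    Continuous f ↔ ∀ ⦃x y : α⦄, x ⤳ y → f x ⤳ f y :=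
  ⟨fun hf _ _ hxy => hxy.map hf, fun hf => continuous_def.2 fun _ hs =>
    isOpen_iff_forall_specializes.2 fun _ _ hxy hy => (hf hxy).mem_open hs hy⟩

end Specialization

namespace Context

instance : AlexandrovDiscrete (Context A) where
  isOpen_sInter _ hS _ hC D hDC s hs := hS s hs _ (hC s hs) D hDC

theorem specializes_iff {C D : Context A} : D ⤳ C ↔ D.carrier ≤ C.carrier := by
  refine ⟨fun h => h.mem_open (s := {E : Context A | E.carrier ≤ C.carrier}) ?_
    (le_refl C.carrier), fun h => specializes_iff_forall_open.2 fun s hs hC => hs C hC D h⟩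
  exact fun E hE F hFE => hFE.trans hE

theorem continuous_restrictChar {D C : Context A} (h : D.carrier ≤ C.carrier) :
    Continuous (restrictChar h : C.Spec → D.Spec) :=
  (WeakDual.continuous_of_continuous_eval fun x =>
    (WeakDual.eval_continuous (inclCLM h x)).comp continuous_subtype_val).subtype_mk _

end Context

namespace SigmaSpace

theorem isOpen_setOf_forall_restrictChar_ne (D : Context A) (μ : D.Spec) :
    IsOpen {p : SigmaSpace A | ∀ h : D.carrier ≤ p.1.carrier, Context.restrictChar h p.2 ≠ μ} :=
  ⟨fun E => by
    simp only [Set.mem_ofPred_eq, Set.ofPred_forall]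
    exact isOpen_iInter_of_finite fun h =>
      isOpen_compl_singleton.preimage (Context.continuous_restrictChar h),
  fun _ _ hFE _ hmem hDF => hmem (hDF.trans hFE)⟩

theorem mk_specializes_mk_iff {D C : Context A} (h : D.carrier ≤ C.carrier) {μ : D.Spec}
    {lam : C.Spec} : (⟨D, μ⟩ : SigmaSpace A) ⤳ ⟨C, lam⟩ ↔ μ = Context.restrictChar h lam := by
  refine ⟨fun hspec => ?_, ?_⟩
  · by_contra hne
    exact hspec.mem_open (isOpen_setOf_forall_restrictChar_ne D μ) (fun _ heq => hne heq.symm)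
      le_rfl rfl
  · rintro rfl
    exact specializes_iff_forall_open.2 fun U hU hmem => hU.2 C D h lam hmem

end SigmaSpace

/-- With the downset topology on contexts, a section of the projection
`π : Σ* → contexts` (assigning to each context `C` a character of `C`) is continuous if and
only if it is a compatible family of characters, i.e. a global section of the spectral
presheaf. -/
theorem statement1 (s : ∀ C : Context A, C.Spec) :
    Continuous (fun C : Context A => (⟨C, s C⟩ : SigmaSpace A)) ↔
      ∀ (C D : Context A) (h : D.carrier ≤ C.carrier), s D = Context.restrictChar h (s C) := by
  rw [continuous_iff_map_specializes]
  constructor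
  · intro hs C D h
    exact (SigmaSpace.mk_specializes_mk_iff h).1 (hs (Context.specializes_iff.2 h))
  · intro hs D C hDC
    have h := Context.specializes_iff.1 hDC
    exact (SigmaSpace.mk_specializes_mk_iff h).2 (hs C D h)
end

section
/- The projection π : Σ* → contexts, (C,λ) ↦ C, where the poset of contexts carries the lower-set topology (opens = downward closed sets of contexts), is a perfect map: it is a closed map (the image under π of every closed subset of Σ* is closed, i.e. its complement is downward closed) and it has compact fibres (for every context C the fibre π⁻¹(C), homeomorphic to the compact space Σ_C, is compact). This is the external content of Corollary 2.7, which asserts that the internal locale Σ* is compact. -/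
open WeakDual

variable (A : Type*) [CStarAlgebra A]

variable {A}

/-!
Each fibre of `Σ* → contexts` is the compact Gelfand spectrum `Σ_C`, mapped in continuously.
The projection is closed because every character of a context `D` extends to every larger
context `C`: by Gelfand duality the restriction `Σ_C → Σ_D` is surjective since the inclusion
`D ↪ C` is injective. So if `(D, μ)` lies in a closed set `K` and `λ|_D = μ`, then `(C, λ)`
lies in `K` too, because the open set `Kᶜ` is closed under restriction.
-/

noncomputable instance Context.instStarRing (C : Context A) : StarRing C.carrier where
  star x := ⟨star x.1, C.star_mem' x.1 x.2⟩
  star_involutive x := Subtype.ext (star_star x.1)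
  star_mul x y := Subtype.ext (star_mul x.1 y.1)
  star_add x y := Subtype.ext (star_add x.1 y.1)

noncomputable instance Context.instStarModule (C : Context A) : StarModule ℂ C.carrier :=
  ⟨fun c x => Subtype.ext (star_smul c x.1)⟩

noncomputable instance Context.instCompleteSpace (C : Context A) : CompleteSpace C.carrier :=
  C.isClosed'.completeSpace_coe

noncomputable instance Context.instNormedCommRing (C : Context A) : NormedCommRing C.carrier :=
  { (inferInstance : NormedRing C.carrier) with
    mul_comm := fun x y => Subtype.ext (C.mul_comm' x.1 x.2 y.1 y.2) }

noncomputable instance Context.instCStarRing (C : Context A) : CStarRing C.carrier where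
  norm_mul_self_le x := (CStarRing.norm_star_mul_self (x := (x : A))).symm.le

noncomputable instance Context.instCommCStarAlgebra (C : Context A) :
    CommCStarAlgebra C.carrier where

namespace WeakDual.CharacterSpace

/-- A character outside the compact image is separated from it by a Urysohn function, which by
Gelfand duality is a nonzero element of `A` killed by `φ`. -/
theorem compContinuousMap_surjective_of_injective {A B : Type*} [CommCStarAlgebra A]
    [CommCStarAlgebra B] {φ : A →⋆ₐ[ℂ] B} (hφ : Function.Injective φ) :
    Function.Surjective (compContinuousMap φ) := by
  intro μ
  by_contra hμ
  have hrange : IsClosed (Set.range (compContinuousMap φ)) :=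
    (isCompact_range (compContinuousMap φ).continuous).isClosed
  obtain ⟨f, hf0, hf1, -⟩ := exists_continuous_zero_one_of_isClosed hrange isClosed_singleton
    (Set.disjoint_singleton_right.mpr hμ)
  let g : C(characterSpace ℂ A, ℂ) := (ContinuousMap.mk _ Complex.continuous_ofReal).comp f
  obtain ⟨a, hag⟩ : ∃ a, gelfandStarTransform A a = g := (gelfandStarTransform A).surjective g
  have ha : a = 0 := by
    refine hφ ((gelfandStarTransform B).injective ?_)
    ext ν
    rw [map_zero, map_zero]
    change gelfandStarTransform A a (compContinuousMap φ ν) = 0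
    rw [hag]
    change ((f (compContinuousMap φ ν) : ℝ) : ℂ) = 0
    rw [hf0 (Set.mem_range_self ν), Pi.zero_apply, Complex.ofReal_zero]
  have hg : g = 0 := by rw [← hag, ha, map_zero]
  simpa [g, hf1 rfl] using DFunLike.congr_fun hg μ

end WeakDual.CharacterSpace

namespace Context

def inclusion {D C : Context A} (h : D.carrier ≤ C.carrier) : D.carrier →⋆ₐ[ℂ] C.carrier :=
  { Subalgebra.inclusion h with map_star' := fun _ => rfl }

theorem restrictChar_surjective {D C : Context A} (h : D.carrier ≤ C.carrier) :
    Function.Surjective (restrictChar h) :=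
  WeakDual.CharacterSpace.compContinuousMap_surjective_of_injective (φ := inclusion h)
    (Subalgebra.inclusion_injective h)

theorem isOpen_iff {s : Set (Context A)} :
    IsOpen s ↔ ∀ C ∈ s, ∀ D : Context A, D.carrier ≤ C.carrier → D ∈ s :=
  Iff.rfl

end Context

namespace SigmaSpace

theorem isOpen_iff {U : Set (SigmaSpace A)} :
    IsOpen U ↔ (∀ C : Context A, IsOpen {lam : C.Spec | Sigma.mk C lam ∈ U}) ∧
      ∀ (C D : Context A) (h : D.carrier ≤ C.carrier) (lam : C.Spec),
        Sigma.mk C lam ∈ U → Sigma.mk D (Context.restrictChar h lam) ∈ U :=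
  Iff.rfl

theorem continuous_mk (C : Context A) : Continuous (Sigma.mk C : C.Spec → SigmaSpace A) :=
  continuous_def.mpr fun _ hU => (isOpen_iff.mp hU).1 C

theorem continuous_fst : Continuous (fun p : SigmaSpace A => p.1) :=
  continuous_def.mpr fun s hs =>
    isOpen_iff.mpr ⟨fun C => isOpen_const (p := C ∈ s),
      fun C D h _ hC => Context.isOpen_iff.mp hs C hC D h⟩

theorem isClosedMap_fst : IsClosedMap (fun p : SigmaSpace A => p.1) := by
  intro K hK
  rw [← isOpen_compl_iff] at hK ⊢
  rintro C hC D hDC ⟨⟨D, μ⟩, hDμ, rfl⟩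
  obtain ⟨lam, hlam⟩ := Context.restrictChar_surjective hDC μ
  have hClam : Sigma.mk C lam ∈ Kᶜ := fun hCK => hC ⟨_, hCK, rfl⟩
  exact (isOpen_iff.mp hK).2 C D hDC lam hClam (hlam ▸ hDμ)

theorem isCompact_fst_preimage_singleton (C : Context A) :
    IsCompact ((fun p : SigmaSpace A => p.1) ⁻¹' {C}) := by
  rw [← Set.range_sigmaMk]
  exact isCompact_range (continuous_mk C)

end SigmaSpace

/-- With the downset topology on the poset of contexts, the projection
`π : Σ* → contexts` is a perfect map: it is continuous, it is a closed map, and every fibre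
`π⁻¹(C)` is compact. (Externally, this says that the internal locale `Σ*` is compact.) -/
theorem statement2 :
    Continuous (fun p : SigmaSpace A => p.1) ∧
    IsClosedMap (fun p : SigmaSpace A => p.1) ∧
    ∀ C : Context A, IsCompact ((fun p : SigmaSpace A => p.1) ⁻¹' {C}) :=
  ⟨SigmaSpace.continuous_fst, SigmaSpace.isClosedMap_fst,
    SigmaSpace.isCompact_fst_preimage_singleton⟩
end

section
/- Suppose there exist a context C and two distinct characters λ₁ ≠ λ₂ in Σ_C (equivalently, A possesses a commutative unital C*-subalgebra whose Gelfand spectrum has at least two points). Then the topological space Σ* is not a regular space; nevertheless Σ* satisfies the T0 separation axiom. (Here the trivial context ℂ·1 is included among the contexts.) -/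
open WeakDual

variable (A : Type*) [CStarAlgebra A]

variable {A}

/-!
`Σ*` is T₀: specialization `p ⤳ q` forces the context of `p` into that of `q` (test with the
open sets `{a ∉ C}`), and within one context it forces equality of characters (test with the
open sets `{λ a ≠ w}`). It is not regular: the trivial context `ℂ·1` has a unique character,
and every open set is closed under restriction to `ℂ·1`, so that point lies in every nonempty
open set. In an R₀ (in particular a regular) T₀ space such a point would equal every other
point, contradicting the existence of two distinct characters.
-/

theorem not_r0Space_of_forall_specializes {X : Type*} [TopologicalSpace X] [T0Space X]
    [Nontrivial X] {b : X} (hb : ∀ x, b ⤳ x) : ¬ R0Space X := by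
  intro _
  obtain ⟨x, y, hxy⟩ := exists_pair_ne X
  exact hxy ((hb x).eq.symm.trans (hb y).eq)

lemma Context.ext {C D : Context A} (h : C.carrier = D.carrier) : C = D := by
  cases C; cases D; cases h; rfl

def Context.bot (A : Type*) [CStarAlgebra A] : Context A where
  carrier := ⊥
  star_mem' := by
    intro x hx
    obtain ⟨c, rfl⟩ := Algebra.mem_bot.mp hx
    exact Algebra.mem_bot.mpr ⟨star c, algebraMap_star_comm c⟩
  isClosed' := by
    change IsClosed (Subalgebra.toSubmodule (⊥ : Subalgebra ℂ A) : Set A)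
    rw [Algebra.toSubmodule_bot, Submodule.one_eq_span]
    exact Submodule.closed_of_finiteDimensional _
  mul_comm' := by
    intro x hx y _
    obtain ⟨c, rfl⟩ := Algebra.mem_bot.mp hx
    exact Algebra.commutes c y

instance : Subsingleton (Context.bot A).Spec where
  allEq χ ψ := WeakDual.CharacterSpace.ext fun x => by
    obtain ⟨c, hc⟩ := Algebra.mem_bot.mp x.2
    obtain rfl : algebraMap ℂ (Context.bot A).carrier c = x := Subtype.ext hc
    rw [AlgHomClass.commutes χ, AlgHomClass.commutes ψ]

namespace SigmaSpace

def notMemSet (a : A) : Set (SigmaSpace A) := {p | a ∉ p.1.carrier}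

theorem isOpen_notMemSet (a : A) : IsOpen (notMemSet a) := by
  refine ⟨fun C => ?_, fun C D h _ hC hD => hC (h hD)⟩
  by_cases ha : a ∈ C.carrier <;> simp [notMemSet, ha]

def evalPreimage (a : A) (V : Set ℂ) : Set (SigmaSpace A) :=
  {p | ∀ h : a ∈ p.1.carrier, p.2 ⟨a, h⟩ ∈ V}

theorem isOpen_evalPreimage (a : A) {V : Set ℂ} (hV : IsOpen V) :
    IsOpen (evalPreimage a V) := by
  refine ⟨fun C => ?_, fun C D h _ hC ha => hC (h ha)⟩
  by_cases ha : a ∈ C.carrier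
  · have hcont : Continuous fun lam : C.Spec => lam ⟨a, ha⟩ :=
      (WeakDual.eval_continuous _).comp continuous_subtype_val
    convert hV.preimage hcont using 1
    ext lam
    exact ⟨fun h => h ha, fun h _ => h⟩
  · convert isOpen_univ
    exact Set.eq_univ_of_forall fun _ h => absurd h ha

theorem carrier_le_of_specializes {p q : SigmaSpace A} (h : p ⤳ q) :
    p.1.carrier ≤ q.1.carrier := fun a hp =>
  by_contra fun hq => h.mem_open (isOpen_notMemSet a) hq hp

theorem eq_of_specializes_mk {C : Context A} {l₁ l₂ : C.Spec}
    (h : (⟨C, l₁⟩ : SigmaSpace A) ⤳ ⟨C, l₂⟩) : l₁ = l₂ := by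
  by_contra hne
  obtain ⟨z, hz⟩ : ∃ z, l₂ z ≠ l₁ z :=
    not_forall.mp fun h' => hne (WeakDual.CharacterSpace.ext h').symm
  have hl₂ : (⟨C, l₂⟩ : SigmaSpace A) ∈ evalPreimage (z : A) {l₁ z}ᶜ := fun _ => hz
  exact h.mem_open (isOpen_evalPreimage _ isOpen_compl_singleton) hl₂ z.2 rfl

instance : T0Space (SigmaSpace A) := by
  refine t0Space_iff_inseparable _ |>.mpr fun ⟨C, l₁⟩ ⟨D, l₂⟩ h => ?_
  obtain rfl : C = D :=
    Context.ext <| le_antisymm (carrier_le_of_specializes h.specializes)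
      (carrier_le_of_specializes h.specializes')
  rw [eq_of_specializes_mk h.specializes]

theorem bot_specializes (χ : (Context.bot A).Spec) (p : SigmaSpace A) :
    (⟨Context.bot A, χ⟩ : SigmaSpace A) ⤳ p :=
  specializes_iff_forall_open.mpr fun _ hU hp =>
    Subsingleton.elim (Context.restrictChar bot_le p.2) χ ▸ hU.2 _ _ bot_le _ hp

end SigmaSpace

/-- If some context of `A` has at least two distinct characters, then the
space `Σ*` is not a regular space; nevertheless it is a T₀ space. (The trivial context
`ℂ·1` is included among the contexts.) -/
theorem statement3 (hyp : ∃ (C : Context A) (lam₁ lam₂ : C.Spec), lam₁ ≠ lam₂) :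
    ¬ RegularSpace (SigmaSpace A) ∧ T0Space (SigmaSpace A) := by
  obtain ⟨C, l₁, l₂, hne⟩ := hyp
  have : Nontrivial (SigmaSpace A) := ⟨⟨C, l₁⟩, ⟨C, l₂⟩, fun h => hne (sigma_mk_injective h)⟩
  refine ⟨fun _ => ?_, inferInstance⟩
  exact not_r0Space_of_forall_specializes
    (SigmaSpace.bot_specializes (Context.restrictChar bot_le l₁)) inferInstance
end

section
/- For every self-adjoint a ∈ C, X_a equals the union of the sets X_b taken over all self-adjoint b ∈ C with the property that for every positive rational q there exists n ∈ ℕ with (b − q·1)⁺ ≤ n·a⁺ (i.e., over all b with D_b ◁ {D_a} in the covering relation of the spectral lattice L_C). -/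
/-!
Everything is tested pointwise on characters: on self-adjoint elements they are real-valued,
they detect the order, and they commute with `⁺`, so `(b - q·1)⁺ ≤ n • a⁺` says exactly that
`(λ b - q)⁺ ≤ n (λ a)⁺` for every `λ`. Taking `b = a` and `n = 1` gives `⊆`. Conversely, if
`λ b > 0`, pick a rational `0 < q < λ b`; then `0 < (λ b - q)⁺ ≤ n (λ a)⁺` forces `λ a > 0`.
-/

open WeakDual
open scoped ComplexOrder

namespace WeakDual.CharacterSpace

variable {C : Type*} [CommCStarAlgebra C]

lemma ofReal_re_apply (lam : characterSpace ℂ C) {x : C} (hx : IsSelfAdjoint x) :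
    ((lam x).re : ℂ) = lam x :=
  Complex.conj_eq_iff_re.mp (hx.map lam)

lemma zero_lt_apply_iff (lam : characterSpace ℂ C) {x : C} (hx : IsSelfAdjoint x) :
    0 < lam x ↔ 0 < (lam x).re := by
  rw [← ofReal_re_apply lam hx, Complex.zero_lt_real, Complex.ofReal_re]

lemma apply_smul_one (lam : characterSpace ℂ C) (z : ℂ) : lam (z • (1 : C)) = z := by
  rw [← Algebra.algebraMap_eq_smul_one, AlgHomClass.commutes, Algebra.algebraMap_self_apply]

lemma apply_posPart (lam : characterSpace ℂ C) {x : C} (hx : IsSelfAdjoint x) :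
    lam x⁺ = (((lam x).re⁺ : ℝ) : ℂ) := by
  rw [CFC.posPart_def, cfcₙ_eq_cfc, StarAlgHomClass.map_cfc (S := ℂ) lam (·⁺ : ℝ → ℝ) x,
    ← cfcₙ_eq_cfc, ← CFC.posPart_def]
  nth_rw 1 [← ofReal_re_apply lam hx]
  exact CFC.posPart_algebraMap (A := ℂ) _

variable [PartialOrder C] [StarOrderedRing C]

lemma nonneg_iff_forall_re_nonneg {x : C} (hx : IsSelfAdjoint x) :
    0 ≤ x ↔ ∀ lam : characterSpace ℂ C, 0 ≤ (lam x).re := by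
  simp only [StarOrderedRing.nonneg_iff_spectrum_nonneg (R := ℂ) x hx.isStarNormal,
    CharacterSpace.mem_spectrum_iff_exists, forall_exists_index, forall_apply_eq_imp_iff]
  exact forall_congr' fun lam ↦ by
    rw [← ofReal_re_apply lam hx, Complex.zero_le_real, Complex.ofReal_re]

lemma le_iff_forall_re_le {x y : C} (hx : IsSelfAdjoint x) (hy : IsSelfAdjoint y) :
    x ≤ y ↔ ∀ lam : characterSpace ℂ C, (lam x).re ≤ (lam y).re := by
  simp only [← sub_nonneg (b := x), nonneg_iff_forall_re_nonneg (hy.sub hx), map_sub,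
    Complex.sub_re, sub_nonneg]

lemma posPart_sub_smul_one_le_nsmul_posPart_iff {a b : C} (ha : IsSelfAdjoint a)
    (hb : IsSelfAdjoint b) (q : ℝ) (n : ℕ) :
    (b - (q : ℂ) • 1)⁺ ≤ n • a⁺ ↔
      ∀ lam : characterSpace ℂ C, ((lam b).re - q)⁺ ≤ n * (lam a).re⁺ := by
  have hbq : IsSelfAdjoint (b - (q : ℂ) • (1 : C)) := hb.sub (by simp [IsSelfAdjoint, star_smul])
  rw [le_iff_forall_re_le (CFC.posPart_nonneg _).isSelfAdjoint
    (nsmul_nonneg (CFC.posPart_nonneg a) n).isSelfAdjoint]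
  refine forall_congr' fun lam ↦ ?_
  rw [map_nsmul, apply_posPart lam ha, apply_posPart lam hbq, map_sub, apply_smul_one,
    Complex.sub_re, Complex.ofReal_re]
  simp

end WeakDual.CharacterSpace

open WeakDual.CharacterSpace in
/-- Let `C` be a commutative unital C*-algebra (equipped with its canonical
order). For every self-adjoint `a ∈ C`, the set `X_a = {λ : λ a > 0}` is the union of the
sets `X_b` over all self-adjoint `b ∈ C` such that for every positive rational `q` there is
an `n ∈ ℕ` with `(b - q·1)⁺ ≤ n • a⁺` (i.e. over all `b` with `D_b ◁ {D_a}`). -/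
theorem statement6 {C : Type*} [CommCStarAlgebra C] [PartialOrder C] [StarOrderedRing C]
    (a : C) (ha : IsSelfAdjoint a) :
    {lam : characterSpace ℂ C | 0 < lam a} =
      ⋃ b ∈ {b : C | IsSelfAdjoint b ∧
          ∀ q : ℚ, 0 < q → ∃ n : ℕ, (b - (q : ℂ) • 1)⁺ ≤ n • a⁺},
        {lam : characterSpace ℂ C | 0 < lam b} := by
  ext lam
  simp only [Set.mem_ofPred_eq, Set.mem_iUnion, exists_prop]
  constructor
  · refine fun hlam ↦ ⟨a, ⟨ha, fun q hq ↦ ⟨1, ?_⟩⟩, hlam⟩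
    rw [← Complex.ofReal_ratCast, posPart_sub_smul_one_le_nsmul_posPart_iff ha ha]
    intro mu
    simpa using posPart_mono (sub_le_self _ (Rat.cast_nonneg.mpr hq.le))
  · rintro ⟨b, ⟨hb, hcov⟩, hlamb⟩
    rw [zero_lt_apply_iff lam hb] at hlamb
    obtain ⟨q, hq, hqb⟩ := exists_rat_btwn hlamb
    obtain ⟨n, hn⟩ := hcov q (Rat.cast_pos.mp hq)
    rw [← Complex.ofReal_ratCast, posPart_sub_smul_one_le_nsmul_posPart_iff ha hb] at hn
    have hpos : 0 < ((lam b).re - q)⁺ := posPart_pos_iff.mpr (sub_pos.mpr hqb)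
    rw [zero_lt_apply_iff lam ha, ← posPart_pos_iff]
    exact pos_of_mul_pos_right (hpos.trans_le (hn lam)) n.cast_nonneg
end

section
/- Let a = [[0,1],[1,1]], b₁ = [[-1,0],[0,0]], b₂ = [[-1/4,0],[0,-3]], and c = [[-1/4,0],[0,0]] in M₂(ℂ) (so c is the entrywise maximum of the diagonal matrices b₁ and b₂, i.e. their join in the diagonal subalgebra). Then b₁ ≤ a and b₂ ≤ a, and b₁ ≤ c and b₂ ≤ c, but c ≰ a: the matrix a − c is not positive semidefinite; indeed for the vector w = (−i, i)ᵀ one has ⟨w, (a − c)w⟩ = −3/4 < 0. -/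
open Matrix
open scoped ComplexOrder

/-- `a = [[0,1],[1,1]]`. -/
noncomputable def aMat : Matrix (Fin 2) (Fin 2) ℂ := !![0, 1; 1, 1]

/-- `b₁ = [[-1,0],[0,0]]`. -/
noncomputable def b1Mat : Matrix (Fin 2) (Fin 2) ℂ := !![-1, 0; 0, 0]

/-- `b₂ = [[-1/4,0],[0,-3]]`. -/
noncomputable def b2Mat : Matrix (Fin 2) (Fin 2) ℂ := !![-1/4, 0; 0, -3]

/-- `c = [[-1/4,0],[0,0]]`, the entrywise maximum (join in the diagonal subalgebra) of
`b₁` and `b₂`. -/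
noncomputable def cMat : Matrix (Fin 2) (Fin 2) ℂ := !![-1/4, 0; 0, 0]

/-- `w = (-i, i)ᵀ`. -/
noncomputable def wVec : Fin 2 → ℂ := ![-Complex.I, Complex.I]

theorem Matrix.not_posSemidef_of_dotProduct_mulVec_neg {n R : Type*} [Fintype n] [Ring R]
    [PartialOrder R] [StarRing R] {M : Matrix n n R} (x : n → R)
    (hx : star x ⬝ᵥ (M *ᵥ x) < 0) : ¬ M.PosSemidef :=
  fun hM => (hM.dotProduct_mulVec_nonneg x).not_gt hx

lemma aMat_sub_b1Mat : aMat - b1Mat = vecMulVec ![1, 1] (star ![1, 1]) := by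
  ext i j
  fin_cases i <;> fin_cases j <;> simp [aMat, b1Mat, vecMulVec_apply]

lemma aMat_sub_b2Mat : aMat - b2Mat = vecMulVec ![1/2, 2] (star ![1/2, 2]) := by
  ext i j
  fin_cases i <;> fin_cases j <;> simp [aMat, b2Mat, vecMulVec_apply] <;> norm_num

lemma cMat_sub_b1Mat : cMat - b1Mat = diagonal ![3/4, 0] := by
  ext i j
  fin_cases i <;> fin_cases j <;> norm_num [cMat, b1Mat]

lemma cMat_sub_b2Mat : cMat - b2Mat = diagonal ![0, 3] := by
  ext i j
  fin_cases i <;> fin_cases j <;> simp [cMat, b2Mat]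

lemma wVec_dotProduct_aMat_sub_cMat : star wVec ⬝ᵥ ((aMat - cMat) *ᵥ wVec) = -3/4 := by
  simp [aMat, cMat, wVec, mulVec, dotProduct, Fin.sum_univ_two]
  ring_nf
  norm_num

/-- In `M₂(ℂ)` with the Loewner order (`x ≤ y` iff `y - x` is positive
semidefinite): `b₁ ≤ a`, `b₂ ≤ a`, `b₁ ≤ c` and `b₂ ≤ c`, but `c ≰ a`; indeed `a - c` is
not positive semidefinite, since `⟨w, (a - c) w⟩ = -3/4 < 0` for `w = (-i, i)ᵀ`. -/
theorem statement16 :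
    (aMat - b1Mat).PosSemidef ∧ (aMat - b2Mat).PosSemidef ∧
    (cMat - b1Mat).PosSemidef ∧ (cMat - b2Mat).PosSemidef ∧
    ¬ (aMat - cMat).PosSemidef ∧
    star wVec ⬝ᵥ ((aMat - cMat) *ᵥ wVec) = -3/4 := by
  refine ⟨?_, ?_, ?_, ?_, ?_, wVec_dotProduct_aMat_sub_cMat⟩
  · rw [aMat_sub_b1Mat]; exact posSemidef_vecMulVec_self_star _
  · rw [aMat_sub_b2Mat]; exact posSemidef_vecMulVec_self_star _
  · rw [cMat_sub_b1Mat, posSemidef_diagonal_iff]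
    intro i; fin_cases i <;> norm_num [Complex.le_def]
  · rw [cMat_sub_b2Mat, posSemidef_diagonal_iff]
    intro i; fin_cases i <;> norm_num [Complex.le_def]
  · refine not_posSemidef_of_dotProduct_mulVec_neg wVec ?_
    rw [wVec_dotProduct_aMat_sub_cMat]
    norm_num
end
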